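/- arXiv:2412.06498 — 2 statements merged into one kernel-verified Lean document; each statement's English description precedes it below -/
import Mathlib

section
/- Let ψ : D → ℝ satisfy the Liouville equation ψ_{w w̄} = (1/2)e^ψ on the unit disc D, let G : D → D be a smooth map satisfying the harmonic map equation G_{z z̄} + (ψ_w ∘ G)·G_z·G_{z̄} = 0, and suppose e^φ := e^{ψ∘G}|G_z|² > 0. Then the Gaussian curvature K_φ := -2 φ_{z z̄} e^{-φ} equals -1 + |μ_G|², where μ_G = G_{z̄}/G_z is the Beltrami differential of G. -/
open Complex

/-- The Wirtinger derivative ∂/∂z of a map ℂ → ℂ (real-differentiable). -/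
noncomputable def wderiv (f : ℂ → ℂ) (z : ℂ) : ℂ :=
  (fderiv ℝ f z 1 - Complex.I * fderiv ℝ f z Complex.I) / 2

/-- The Wirtinger derivative ∂/∂z̄ of a map ℂ → ℂ (real-differentiable). -/
noncomputable def wderivBar (f : ℂ → ℂ) (z : ℂ) : ℂ :=
  (fderiv ℝ f z 1 + Complex.I * fderiv ℝ f z Complex.I) / 2

lemma wsmooth {f : ℂ → ℂ} (hf : ContDiff ℝ (⊤ : ℕ∞) f) : ContDiff ℝ (⊤ : ℕ∞) (wderiv f) := by
  have h := hf.fderiv_right (m := (⊤ : ℕ∞)) (by simp)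
  exact (((h.clm_apply contDiff_const).sub
    (contDiff_const.mul (h.clm_apply contDiff_const)))).div_const 2

lemma wsmoothBar {f : ℂ → ℂ} (hf : ContDiff ℝ (⊤ : ℕ∞) f) : ContDiff ℝ (⊤ : ℕ∞) (wderivBar f) := by
  have h := hf.fderiv_right (m := (⊤ : ℕ∞)) (by simp)
  exact (((h.clm_apply contDiff_const).add
    (contDiff_const.mul (h.clm_apply contDiff_const)))).div_const 2

lemma fderiv_wirtinger {f : ℂ → ℂ} {z : ℂ} (hf : DifferentiableAt ℝ f z) (v : ℂ) :
    fderiv ℝ f z v = wderiv f z * v + wderivBar f z * (starRingEnd ℂ) v := by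
  have hv : v = v.re • (1:ℂ) + v.im • Complex.I := by
    simp [real_smul]
  rw [hv, (fderiv ℝ f z).map_add, (fderiv ℝ f z).map_smul, (fderiv ℝ f z).map_smul]
  simp only [wderiv, wderivBar, real_smul, map_add, map_smul, map_mul, Complex.conj_ofReal,
    map_one, Complex.conj_I, smul_eq_mul]
  linear_combination (↑v.im * (fderiv ℝ f z) I) * Complex.I_sq

lemma wderiv_congr {f g : ℂ → ℂ} {z : ℂ} (h : f =ᶠ[nhds z] g) : wderiv f z = wderiv g z := by
  rw [wderiv, wderiv, h.fderiv_eq]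

lemma wderivBar_congr {f g : ℂ → ℂ} {z : ℂ} (h : f =ᶠ[nhds z] g) :
    wderivBar f z = wderivBar g z := by
  rw [wderivBar, wderivBar, h.fderiv_eq]

lemma wderiv_mul {f g : ℂ → ℂ} {z : ℂ} (hf : DifferentiableAt ℝ f z)
    (hg : DifferentiableAt ℝ g z) :
    wderiv (fun x => f x * g x) z = wderiv f z * g z + f z * wderiv g z := by
  simp only [wderiv, fderiv_fun_mul hf hg, ContinuousLinearMap.add_apply,
    ContinuousLinearMap.smul_apply, smul_eq_mul]
  ring

lemma wderivBar_mul {f g : ℂ → ℂ} {z : ℂ} (hf : DifferentiableAt ℝ f z)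
    (hg : DifferentiableAt ℝ g z) :
    wderivBar (fun x => f x * g x) z = wderivBar f z * g z + f z * wderivBar g z := by
  simp only [wderivBar, fderiv_fun_mul hf hg, ContinuousLinearMap.add_apply,
    ContinuousLinearMap.smul_apply, smul_eq_mul]
  ring

lemma fderiv_conj_comp (f : ℂ → ℂ) (z : ℂ) (v : ℂ) :
    fderiv ℝ (fun x => (starRingEnd ℂ) (f x)) z v = (starRingEnd ℂ) (fderiv ℝ f z v) := by
  have : (fun x => (starRingEnd ℂ) (f x)) = (Complex.conjLIE ∘ f) := rfl
  rw [this, Complex.conjLIE.comp_fderiv]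
  rfl

lemma wderiv_conj (f : ℂ → ℂ) (z : ℂ) :
    wderiv (fun x => (starRingEnd ℂ) (f x)) z = (starRingEnd ℂ) (wderivBar f z) := by
  simp only [wderiv, wderivBar, fderiv_conj_comp, map_add, map_mul, map_div₀, Complex.conj_I,
    map_ofNat]
  ring

lemma wderivBar_conj (f : ℂ → ℂ) (z : ℂ) :
    wderivBar (fun x => (starRingEnd ℂ) (f x)) z = (starRingEnd ℂ) (wderiv f z) := by
  simp only [wderiv, wderivBar, fderiv_conj_comp, map_add, map_sub, map_mul, map_div₀,
    Complex.conj_I, map_ofNat]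
  ring

lemma fderiv_cexp_comp {f : ℂ → ℂ} {z : ℂ} (hf : DifferentiableAt ℝ f z) (v : ℂ) :
    fderiv ℝ (fun x => Complex.exp (f x)) z v = Complex.exp (f z) * fderiv ℝ f z v := by
  have h1 : HasFDerivAt Complex.exp
      (((ContinuousLinearMap.id ℂ ℂ).smulRight (Complex.exp (f z))).restrictScalars ℝ) (f z) :=
    ((Complex.hasDerivAt_exp (f z)).hasFDerivAt).restrictScalars ℝ
  have h2 := h1.comp z hf.hasFDerivAt
  rw [show (fun x => Complex.exp (f x)) = Complex.exp ∘ f from rfl, h2.fderiv]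
  simp [mul_comm]

lemma wderiv_cexp {f : ℂ → ℂ} {z : ℂ} (hf : DifferentiableAt ℝ f z) :
    wderiv (fun x => Complex.exp (f x)) z = Complex.exp (f z) * wderiv f z := by
  simp only [wderiv, fderiv_cexp_comp hf]; ring

lemma wderivBar_cexp {f : ℂ → ℂ} {z : ℂ} (hf : DifferentiableAt ℝ f z) :
    wderivBar (fun x => Complex.exp (f x)) z = Complex.exp (f z) * wderivBar f z := by
  simp only [wderivBar, fderiv_cexp_comp hf]; ring

lemma wderiv_comp {u G : ℂ → ℂ} {z : ℂ} (hu : DifferentiableAt ℝ u (G z))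
    (hG : DifferentiableAt ℝ G z) :
    wderiv (fun x => u (G x)) z
      = wderiv u (G z) * wderiv G z + wderivBar u (G z) * (starRingEnd ℂ) (wderivBar G z) := by
  have h := fderiv_comp z hu hG
  have e1 : fderiv ℝ (fun x => u (G x)) z 1 = fderiv ℝ u (G z) (fderiv ℝ G z 1) := by
    rw [show (fun x => u (G x)) = u ∘ G from rfl, h]; rfl
  have eI : fderiv ℝ (fun x => u (G x)) z Complex.I
      = fderiv ℝ u (G z) (fderiv ℝ G z Complex.I) := by
    rw [show (fun x => u (G x)) = u ∘ G from rfl, h]; rfl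
  have d1 : fderiv ℝ G z 1 = wderiv G z + wderivBar G z := by
    rw [fderiv_wirtinger hG]; simp
  have dI : fderiv ℝ G z Complex.I = (wderiv G z - wderivBar G z) * Complex.I := by
    rw [fderiv_wirtinger hG]; simp [Complex.conj_I]; ring
  conv_lhs => rw [wderiv, e1, eI, fderiv_wirtinger hu, fderiv_wirtinger hu, d1, dI]
  simp only [map_add, map_sub, map_mul, Complex.conj_I]
  linear_combination ((-(wderiv u (G z))*(wderiv G z - wderivBar G z)
    + wderivBar u (G z)*((starRingEnd ℂ) (wderiv G z) - (starRingEnd ℂ) (wderivBar G z)))/2)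
    * Complex.I_sq

lemma wderivBar_comp {u G : ℂ → ℂ} {z : ℂ} (hu : DifferentiableAt ℝ u (G z))
    (hG : DifferentiableAt ℝ G z) :
    wderivBar (fun x => u (G x)) z
      = wderiv u (G z) * wderivBar G z + wderivBar u (G z) * (starRingEnd ℂ) (wderiv G z) := by
  have h := fderiv_comp z hu hG
  have e1 : fderiv ℝ (fun x => u (G x)) z 1 = fderiv ℝ u (G z) (fderiv ℝ G z 1) := by
    rw [show (fun x => u (G x)) = u ∘ G from rfl, h]; rfl
  have eI : fderiv ℝ (fun x => u (G x)) z Complex.I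
      = fderiv ℝ u (G z) (fderiv ℝ G z Complex.I) := by
    rw [show (fun x => u (G x)) = u ∘ G from rfl, h]; rfl
  have d1 : fderiv ℝ G z 1 = wderiv G z + wderivBar G z := by
    rw [fderiv_wirtinger hG]; simp
  have dI : fderiv ℝ G z Complex.I = (wderiv G z - wderivBar G z) * Complex.I := by
    rw [fderiv_wirtinger hG]; simp [Complex.conj_I]; ring
  conv_lhs => rw [wderivBar, e1, eI, fderiv_wirtinger hu, fderiv_wirtinger hu, d1, dI]
  simp only [map_add, map_sub, map_mul, Complex.conj_I]
  linear_combination (((wderiv u (G z))*(wderiv G z - wderivBar G z)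
    - wderivBar u (G z)*((starRingEnd ℂ) (wderiv G z) - (starRingEnd ℂ) (wderivBar G z)))/2)
    * Complex.I_sq

noncomputable def wcoord : (ℂ →L[ℝ] ℂ) →L[ℝ] ℂ :=
  (2⁻¹ : ℂ) • (ContinuousLinearMap.apply ℝ ℂ (1 : ℂ)
    - Complex.I • ContinuousLinearMap.apply ℝ ℂ (Complex.I))

noncomputable def wcoordBar : (ℂ →L[ℝ] ℂ) →L[ℝ] ℂ :=
  (2⁻¹ : ℂ) • (ContinuousLinearMap.apply ℝ ℂ (1 : ℂ)
    + Complex.I • ContinuousLinearMap.apply ℝ ℂ (Complex.I))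

lemma wderiv_eq_wcoord (f : ℂ → ℂ) : wderiv f = fun x => wcoord (fderiv ℝ f x) := by
  funext x
  simp only [wderiv, wcoord, ContinuousLinearMap.smul_apply, ContinuousLinearMap.sub_apply,
    ContinuousLinearMap.apply_apply, smul_eq_mul]
  ring

lemma wderivBar_eq_wcoordBar (f : ℂ → ℂ) : wderivBar f = fun x => wcoordBar (fderiv ℝ f x) := by
  funext x
  simp only [wderivBar, wcoordBar, ContinuousLinearMap.smul_apply, ContinuousLinearMap.add_apply,
    ContinuousLinearMap.apply_apply, smul_eq_mul]
  ring

lemma wderiv_comm {f : ℂ → ℂ} (hf : ContDiff ℝ (⊤ : ℕ∞) f) (z : ℂ) :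
    wderivBar (wderiv f) z = wderiv (wderivBar f) z := by
  have hd : DifferentiableAt ℝ (fderiv ℝ f) z :=
    ((hf.fderiv_right (m := (⊤ : ℕ∞)) (by simp)).differentiable (by simp)).differentiableAt
  have hsym : IsSymmSndFDerivAt ℝ f z := hf.contDiffAt.isSymmSndFDerivAt (by simp only [minSmoothness_of_isRCLikeNormedField]; show ((2 : ℕ∞) : WithTop ℕ∞) ≤ _; exact WithTop.coe_le_coe.mpr le_top)
  have h1 : ∀ v, fderiv ℝ (wderiv f) z v = wcoord (fderiv ℝ (fderiv ℝ f) z v) := by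
    intro v
    rw [wderiv_eq_wcoord]
    exact congrFun (congrArg _ ((wcoord.hasFDerivAt.comp z hd.hasFDerivAt).fderiv)) v
  have h2 : ∀ v, fderiv ℝ (wderivBar f) z v = wcoordBar (fderiv ℝ (fderiv ℝ f) z v) := by
    intro v
    rw [wderivBar_eq_wcoordBar]
    exact congrFun (congrArg _ ((wcoordBar.hasFDerivAt.comp z hd.hasFDerivAt).fderiv)) v
  rw [wderivBar, wderiv, h1, h1, h2, h2]
  simp only [wcoord, wcoordBar, ContinuousLinearMap.smul_apply, ContinuousLinearMap.sub_apply,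
    ContinuousLinearMap.add_apply, ContinuousLinearMap.apply_apply, smul_eq_mul]
  linear_combination (Complex.I / 2) * (hsym Complex.I 1)

lemma wderivBar_add {f g : ℂ → ℂ} {z : ℂ} (hf : DifferentiableAt ℝ f z)
    (hg : DifferentiableAt ℝ g z) :
    wderivBar (fun x => f x + g x) z = wderivBar f z + wderivBar g z := by
  simp only [wderivBar, fderiv_fun_add hf hg, ContinuousLinearMap.add_apply]; ring

lemma wderiv_neg {f : ℂ → ℂ} {z : ℂ} :
    wderiv (fun x => -(f x)) z = -(wderiv f z) := by
  simp only [wderiv, fderiv_fun_neg, ContinuousLinearMap.neg_apply]; ring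

lemma contDiff_conj {f : ℂ → ℂ} (hf : ContDiff ℝ (⊤ : ℕ∞) f) :
    ContDiff ℝ (⊤ : ℕ∞) (fun x => (starRingEnd ℂ) (f x)) := by
  have h : (fun x => (starRingEnd ℂ) (f x)) = fun x => Complex.conjCLE (f x) := by
    funext x; simp [Complex.conjCLE]
  rw [h]
  exact Complex.conjCLE.toContinuousLinearMap.contDiff.comp hf

lemma wderivBar_real {g : ℂ → ℝ} (hg : Differentiable ℝ (fun w => (g w : ℂ))) (w : ℂ) :
    wderivBar (fun w => (g w : ℂ)) w
      = (starRingEnd ℂ) (wderiv (fun w => (g w : ℂ)) w) := by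
  have hfd : ∀ v, (starRingEnd ℂ) (fderiv ℝ (fun w => (g w : ℂ)) w v)
      = fderiv ℝ (fun w => (g w : ℂ)) w v := by
    intro v
    have hχ : DifferentiableAt ℝ (fun w => ((g w : ℂ)).re) w :=
      (Complex.reCLM.differentiable.comp hg) w
    have h1 : (fun w => (g w : ℂ)) = fun w => Complex.ofRealCLM ((fun w => ((g w : ℂ)).re) w) := by
      funext x; simp
    have h2 := (Complex.ofRealCLM.hasFDerivAt.comp w hχ.hasFDerivAt).fderiv
    rw [h1, show (fun w => Complex.ofRealCLM ((fun w => ((g w : ℂ)).re) w))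
      = Complex.ofRealCLM ∘ (fun w => ((g w : ℂ)).re) from rfl, h2]
    simp
  rw [wderivBar, wderiv, map_div₀, map_sub, map_mul, map_ofNat, Complex.conj_I, hfd, hfd]
  ring

/-- The Gaussian curvature of the pullback metric e^φ|dz|² = e^{ψ∘G}|G_z|²|dz|²
of a harmonic map G equals -1 + |μ_G|². -/
theorem gaussian_curvature_harmonic_map
    (ψ φ : ℂ → ℝ) (G : ℂ → ℂ)
    (hψs : ContDiff ℝ (⊤ : ℕ∞) (fun w => (ψ w : ℂ)))
    (hφs : ContDiff ℝ (⊤ : ℕ∞) (fun w => (φ w : ℂ)))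
    (hGs : ContDiff ℝ (⊤ : ℕ∞) G)
    (hGmap : Set.MapsTo G (Metric.ball (0 : ℂ) 1) (Metric.ball (0 : ℂ) 1))
    -- Liouville equation  ψ_{w w̄} = (1/2) e^ψ  on the unit disc
    (hLiouville : ∀ w ∈ Metric.ball (0 : ℂ) 1,
      wderivBar (fun u => wderiv (fun v => (ψ v : ℂ)) u) w
        = (1 / 2) * Complex.exp (ψ w))
    -- harmonic map equation  G_{z z̄} + (ψ_w ∘ G) G_z G_{z̄} = 0
    (hHarmonic : ∀ z ∈ Metric.ball (0 : ℂ) 1,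
      wderivBar (fun u => wderiv G u) z
        + wderiv (fun v => (ψ v : ℂ)) (G z) * wderiv G z * wderivBar G z = 0)
    -- e^φ = e^{ψ∘G}|G_z|² > 0
    (hφ : ∀ z ∈ Metric.ball (0 : ℂ) 1,
      Real.exp (φ z) = Real.exp (ψ (G z)) * ‖wderiv G z‖ ^ 2)
    (hGz : ∀ z ∈ Metric.ball (0 : ℂ) 1, wderiv G z ≠ 0) :
    ∀ z ∈ Metric.ball (0 : ℂ) 1,
      -2 * wderivBar (fun u => wderiv (fun v => (φ v : ℂ)) u) z
          * Complex.exp (-(φ z) : ℝ)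
        = -1 + ((‖wderivBar G z / wderiv G z‖ : ℝ) : ℂ) ^ 2 := by
  intro z hz
  have hopen : IsOpen (Metric.ball (0:ℂ) 1) := Metric.isOpen_ball
  set Ψ : ℂ → ℂ := fun v => (ψ v : ℂ) with hΨdef
  set Φ : ℂ → ℂ := fun v => (φ v : ℂ) with hΦdef
  have hL : ∀ w ∈ Metric.ball (0:ℂ) 1,
      wderivBar (wderiv Ψ) w = (1/2) * Complex.exp (Ψ w) := hLiouville
  have hHa : ∀ x ∈ Metric.ball (0:ℂ) 1,
      wderivBar (wderiv G) x + wderiv Ψ (G x) * wderiv G x * wderivBar G x = 0 := hHarmonic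
  set p := wderiv G with hp_def
  set q := wderivBar G with hq_def
  set P := wderiv Ψ with hP_def
  -- smoothness / differentiability package
  have hΨd := hψs.differentiable (by simp)
  have hΦd := hφs.differentiable (by simp)
  have hGd := hGs.differentiable (by simp)
  have hps : ContDiff ℝ (⊤ : ℕ∞) p := wsmooth hGs
  have hqs : ContDiff ℝ (⊤ : ℕ∞) q := wsmoothBar hGs
  have hPs : ContDiff ℝ (⊤ : ℕ∞) P := wsmooth hψs
  have hpd := hps.differentiable (by simp)
  have hqd := hqs.differentiable (by simp)
  have hPd := hPs.differentiable (by simp)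
  have hHs : ContDiff ℝ (⊤ : ℕ∞) (fun x => Ψ (G x)) := hψs.comp hGs
  have hHd := hHs.differentiable (by simp)
  have hPGs : ContDiff ℝ (⊤ : ℕ∞) (fun x => P (G x)) := hPs.comp hGs
  have hPGd := hPGs.differentiable (by simp)
  have hcPGs : ContDiff ℝ (⊤ : ℕ∞) (fun x => (starRingEnd ℂ) (P (G x))) := contDiff_conj hPGs
  have hcPGd := hcPGs.differentiable (by simp)
  have hcps : ContDiff ℝ (⊤ : ℕ∞) (fun x => (starRingEnd ℂ) (p x)) := contDiff_conj hps
  have hcpd := hcps.differentiable (by simp)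
  have hcqs : ContDiff ℝ (⊤ : ℕ∞) (fun x => (starRingEnd ℂ) (q x)) := contDiff_conj hqs
  have hcqd := hcqs.differentiable (by simp)
  have hMs : ContDiff ℝ (⊤ : ℕ∞) (fun x => p x * (starRingEnd ℂ) (p x)) := hps.mul hcps
  have hMd := hMs.differentiable (by simp)
  have heHs : ContDiff ℝ (⊤ : ℕ∞) (fun x => Complex.exp (Ψ (G x))) :=
    Complex.contDiff_exp.comp hHs
  have heHd := heHs.differentiable (by simp)
  have hEs : ContDiff ℝ (⊤ : ℕ∞) (fun x => Complex.exp (Φ x)) :=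
    Complex.contDiff_exp.comp hφs
  have hEd := hEs.differentiable (by simp)
  have hwHs : ContDiff ℝ (⊤ : ℕ∞) (wderiv (fun x => Ψ (G x))) := wsmooth hHs
  have hwHd := hwHs.differentiable (by simp)
  have hwps : ContDiff ℝ (⊤ : ℕ∞) (wderiv p) := wsmooth hps
  have hwpd := hwps.differentiable (by simp)
  have hwpBs : ContDiff ℝ (⊤ : ℕ∞) (wderivBar p) := wsmoothBar hps
  have hwpBd := hwpBs.differentiable (by simp)
  have hcwpBs : ContDiff ℝ (⊤ : ℕ∞) (fun x => (starRingEnd ℂ) (wderivBar p x)) := contDiff_conj hwpBs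
  have hcwpBd := hcwpBs.differentiable (by simp)
  have hwΦs : ContDiff ℝ (⊤ : ℕ∞) (wderiv Φ) := wsmooth hφs
  have hwΦd := hwΦs.differentiable (by simp)
  -- realness facts
  have hreal : ∀ w, wderivBar Ψ w = (starRingEnd ℂ) (P w) := fun w => wderivBar_real hΨd w
  -- Step A : exp(Φ) = exp(Ψ∘G) |p|² on the ball
  have hEF : Set.EqOn (fun x => Complex.exp (Φ x))
      (fun x => Complex.exp (Ψ (G x)) * (p x * (starRingEnd ℂ) (p x)))
      (Metric.ball (0:ℂ) 1) := by
    intro x hx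
    have h := hφ x hx
    show Complex.exp (Φ x) = Complex.exp (Ψ (G x)) * (p x * (starRingEnd ℂ) (p x))
    rw [hΨdef, hΦdef]
    simp only [← Complex.ofReal_exp]
    rw [h]
    push_cast
    rw [← Complex.ofReal_pow, Complex.sq_norm, Complex.mul_conj]
  have hEFz : Complex.exp (Φ z) = Complex.exp (Ψ (G z)) * (p z * (starRingEnd ℂ) (p z)) := hEF hz
  -- Step B : derivative identities for E = exp Φ
  have gE1 : wderiv (fun x => Complex.exp (Φ x)) = fun x => Complex.exp (Φ x) * wderiv Φ x :=
    funext fun x => wderiv_cexp (hΦd x)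
  have gE2 : wderivBar (fun x => Complex.exp (Φ x)) z = Complex.exp (Φ z) * wderivBar Φ z :=
    wderivBar_cexp (hΦd z)
  have hwEz : wderiv (fun x => Complex.exp (Φ x)) z = Complex.exp (Φ z) * wderiv Φ z :=
    congrFun gE1 z
  have hstar : wderivBar (wderiv (fun x => Complex.exp (Φ x))) z
      = wderivBar (fun x => Complex.exp (Φ x)) z * wderiv Φ z
        + Complex.exp (Φ z) * wderivBar (wderiv Φ) z := by
    rw [gE1]
    exact wderivBar_mul (hEd z) (hwΦd z)
  have hkeyE : Complex.exp (Φ z) ^ 2 * wderivBar (wderiv Φ) z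
      = Complex.exp (Φ z) * wderivBar (wderiv (fun x => Complex.exp (Φ x))) z
        - wderiv (fun x => Complex.exp (Φ x)) z * wderivBar (fun x => Complex.exp (Φ x)) z := by
    rw [hstar, gE2, hwEz]; ring
  -- Step C : transfer to F = exp(Ψ∘G)·p·conj p
  have hwEF : Set.EqOn (wderiv (fun x => Complex.exp (Φ x)))
      (wderiv (fun x => Complex.exp (Ψ (G x)) * (p x * (starRingEnd ℂ) (p x))))
      (Metric.ball (0:ℂ) 1) := fun x hx =>
    wderiv_congr (Filter.eventuallyEq_of_mem (hopen.mem_nhds hx) hEF)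
  have hwBEF : wderivBar (fun x => Complex.exp (Φ x)) z
      = wderivBar (fun x => Complex.exp (Ψ (G x)) * (p x * (starRingEnd ℂ) (p x))) z :=
    wderivBar_congr (Filter.eventuallyEq_of_mem (hopen.mem_nhds hz) hEF)
  have h2nd : wderivBar (wderiv (fun x => Complex.exp (Φ x))) z
      = wderivBar (wderiv (fun x => Complex.exp (Ψ (G x)) * (p x * (starRingEnd ℂ) (p x)))) z :=
    wderivBar_congr (Filter.eventuallyEq_of_mem (hopen.mem_nhds hz) hwEF)
  have hkey : Complex.exp (Φ z) ^ 2 * wderivBar (wderiv Φ) z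
      = Complex.exp (Φ z)
          * wderivBar (wderiv (fun x => Complex.exp (Ψ (G x)) * (p x * (starRingEnd ℂ) (p x)))) z
        - wderiv (fun x => Complex.exp (Ψ (G x)) * (p x * (starRingEnd ℂ) (p x))) z
          * wderivBar (fun x => Complex.exp (Ψ (G x)) * (p x * (starRingEnd ℂ) (p x))) z := by
    have h3 : wderiv (fun x => Complex.exp (Φ x)) z
        = wderiv (fun x => Complex.exp (Ψ (G x)) * (p x * (starRingEnd ℂ) (p x))) z := hwEF hz
    rw [hkeyE, h2nd, hwBEF, h3]
  -- Step D : inputs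
  have hharm : Set.EqOn (wderivBar p) (fun x => -(P (G x) * p x * q x))
      (Metric.ball (0:ℂ) 1) := fun x hx => eq_neg_of_add_eq_zero_left (hHa x hx)
  have hBp : wderivBar p z = -(P (G z) * p z * q z) := hharm hz
  have hwqz : wderiv q z = wderivBar p z := (wderiv_comm hGs z).symm
  have gPG : wderiv (fun x => P (G x)) z
      = wderiv P (G z) * p z + 1/2 * Complex.exp (Ψ (G z)) * (starRingEnd ℂ) (q z) := by
    rw [wderiv_comp (hPd (G z)) (hGd z), hL (G z) (hGmap hz)]
  have gPGB : wderivBar (fun x => P (G x)) z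
      = wderiv P (G z) * q z + 1/2 * Complex.exp (Ψ (G z)) * (starRingEnd ℂ) (p z) := by
    rw [wderivBar_comp (hPd (G z)) (hGd z), hL (G z) (hGmap hz)]
  have gH1 : wderiv (fun x => Ψ (G x))
      = fun x => P (G x) * p x + (starRingEnd ℂ) (P (G x)) * (starRingEnd ℂ) (q x) := by
    funext x
    rw [wderiv_comp (hΨd (G x)) (hGd x), hreal (G x)]
  have gHz : wderiv (fun x => Ψ (G x)) z
      = P (G z) * p z + (starRingEnd ℂ) (P (G z)) * (starRingEnd ℂ) (q z) := congrFun gH1 z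
  have gHB : wderivBar (fun x => Ψ (G x)) z
      = P (G z) * q z + (starRingEnd ℂ) (P (G z)) * (starRingEnd ℂ) (p z) := by
    rw [wderivBar_comp (hΨd (G z)) (hGd z), hreal (G z)]
  have hs2 : wderiv (wderivBar p) z
      = -((wderiv P (G z) * p z + 1/2 * Complex.exp (Ψ (G z)) * (starRingEnd ℂ) (q z)) * p z * q z
          + P (G z) * wderiv p z * q z + P (G z) * p z * -(P (G z) * p z * q z)) := by
    rw [wderiv_congr (Filter.eventuallyEq_of_mem (hopen.mem_nhds hz) hharm), wderiv_neg,
      wderiv_mul ((hPGs.mul hps).differentiable (by simp) z) (hqd z),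
      wderiv_mul (hPGd z) (hpd z), gPG, hwqz, hBp]
    ring
  have hwBwp : wderivBar (wderiv p) z = wderiv (wderivBar p) z := wderiv_comm hps z
  have gH2 : wderivBar (wderiv (fun x => Ψ (G x))) z
      = ((wderiv P (G z) * q z + 1/2 * Complex.exp (Ψ (G z)) * (starRingEnd ℂ) (p z)) * p z
          + P (G z) * -(P (G z) * p z * q z))
        + ((starRingEnd ℂ) (wderiv P (G z) * p z
              + 1/2 * Complex.exp (Ψ (G z)) * (starRingEnd ℂ) (q z)) * (starRingEnd ℂ) (q z)
          + (starRingEnd ℂ) (P (G z)) * (starRingEnd ℂ) (-(P (G z) * p z * q z))) := by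
    simp only [gH1]
    rw [wderivBar_add ((hPGs.mul hps).differentiable (by simp) z)
        ((hcPGs.mul hcqs).differentiable (by simp) z),
      wderivBar_mul (hPGd z) (hpd z), wderivBar_mul (hcPGd z) (hcqd z),
      wderivBar_conj (fun x => P (G x)) z, wderivBar_conj q z,
      gPGB, gPG, hwqz, hBp]
  -- F-derivative expansions
  have gF1 : wderiv (fun x => Complex.exp (Ψ (G x)) * (p x * (starRingEnd ℂ) (p x)))
      = fun x => Complex.exp (Ψ (G x)) * wderiv (fun y => Ψ (G y)) x
            * (p x * (starRingEnd ℂ) (p x))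
          + Complex.exp (Ψ (G x)) * (wderiv p x * (starRingEnd ℂ) (p x)
            + p x * (starRingEnd ℂ) (wderivBar p x)) := by
    funext x
    rw [wderiv_mul (heHd x) (hMd x), wderiv_cexp (hHd x), wderiv_mul (hpd x) (hcpd x),
      wderiv_conj p x]
  have gFBz : wderivBar (fun x => Complex.exp (Ψ (G x)) * (p x * (starRingEnd ℂ) (p x))) z
      = Complex.exp (Ψ (G z)) * wderivBar (fun y => Ψ (G y)) z
          * (p z * (starRingEnd ℂ) (p z))
        + Complex.exp (Ψ (G z)) * (wderivBar p z * (starRingEnd ℂ) (p z)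
          + p z * (starRingEnd ℂ) (wderiv p z)) := by
    rw [wderivBar_mul (heHd z) (hMd z), wderivBar_cexp (hHd z),
      wderivBar_mul (hpd z) (hcpd z), wderivBar_conj p z]
  have hce : (starRingEnd ℂ) (Complex.exp (Ψ (G z))) = Complex.exp (Ψ (G z)) := by
    rw [hΨdef]; simp [← Complex.ofReal_exp]
  -- the grand computation
  have hbig : Complex.exp (Φ z) ^ 2 * wderivBar (wderiv Φ) z
      = Complex.exp (Φ z) ^ 2
        * (Complex.exp (Ψ (G z)) / 2
          * (p z * (starRingEnd ℂ) (p z) - q z * (starRingEnd ℂ) (q z))) := by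
    rw [hkey]
    rw [gFBz]
    simp only [gF1]
    rw [wderivBar_add (((heHs.mul hwHs).mul hMs).differentiable (by simp) z)
        ((heHs.mul ((hwps.mul hcps).add (hps.mul hcwpBs))).differentiable (by simp) z),
      wderivBar_mul ((heHs.mul hwHs).differentiable (by simp) z) (hMd z),
      wderivBar_mul (heHd z) (hwHd z),
      wderivBar_mul (heHd z) (((hwps.mul hcps).add (hps.mul hcwpBs)).differentiable (by simp) z),
      wderivBar_add ((hwps.mul hcps).differentiable (by simp) z)
        ((hps.mul hcwpBs).differentiable (by simp) z),
      wderivBar_mul (hwpd z) (hcpd z),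
      wderivBar_mul (hpd z) (hcwpBd z),
      wderivBar_mul (hpd z) (hcpd z),
      wderivBar_conj p z,
      wderivBar_conj (wderivBar p) z,
      wderivBar_cexp (hHd z)]
    rw [gH2, gHz, gHB, hwBwp, hs2, hBp, hEFz]
    simp only [map_mul, map_add, map_neg, map_sub, map_div₀, map_one, map_ofNat,
      Complex.conj_conj, hce]
    ring
  have hT : wderivBar (wderiv Φ) z
      = Complex.exp (Ψ (G z)) / 2
        * (p z * (starRingEnd ℂ) (p z) - q z * (starRingEnd ℂ) (q z)) :=
    mul_left_cancel₀ (pow_ne_zero 2 (Complex.exp_ne_zero (Φ z))) hbig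
  -- final assembly
  have hpz := hGz z hz
  have hcpz : (starRingEnd ℂ) (p z) ≠ 0 := fun h =>
    hpz (by simpa using congrArg (starRingEnd ℂ) h)
  have he0 : Complex.exp (Ψ (G z)) ≠ 0 := Complex.exp_ne_zero _
  have hexpneg : Complex.exp ((-(φ z) : ℝ) : ℂ) = (Complex.exp (Φ z))⁻¹ := by
    rw [Complex.ofReal_neg, Complex.exp_neg]
  have habs : ((‖q z / p z‖ : ℝ) : ℂ) ^ 2
      = (q z * (starRingEnd ℂ) (q z)) / (p z * (starRingEnd ℂ) (p z)) := by
    rw [← Complex.ofReal_pow, Complex.sq_norm, ← Complex.mul_conj, map_div₀]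
    field_simp
  show -2 * wderivBar (wderiv Φ) z * Complex.exp ((-(φ z) : ℝ) : ℂ)
      = -1 + ((‖q z / p z‖ : ℝ) : ℂ) ^ 2
  rw [hT, hexpneg, hEFz, habs]
  field_simp
  ring
end

section
/- Let m ∈ ℂ with |m| < 1 and let P₊, P₋, Q₊, Q₋ ∈ ℂ with conj(P_±) = Q_± (representing F_±^*(ν_±) and F_±^*(conj ν_±)). Define δΦ = (1/2)e^φ[(P₊ - P₋)conj(m)² + (Q₊ - Q₋)] and δμ = (1/2)(1+|m|²)⁻¹[(P₊ + P₋) + (Q₊ + Q₋)m²], with e^φ > 0 real. Then, antisymmetrizing in two such deformation vectors (P_±, Q_±) and (P'_±, Q'_±): i·(δΦ ∧ δμ - conj(δΦ) ∧ conj(δμ)) = -(i/2)(1-|m|²)e^φ·(P₊ ∧ Q'₊ - P₋ ∧ Q'₋), where X ∧ Y' := X·Y' - X'·Y. -/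
/-!
With `A = P₊ - P₋`, `S = P₊ + P₋` and `r = m * conj m = |m|²`, the variations are
`δΦ = a (A conj m² + conj A)` and `δμ = b (S + conj S m²)` with real `a = e^φ / 2`,
`b = 1 / (2 (1 + r))`. Expanding `δΦ ∧ δμ'` gives four wedges; subtracting the conjugate cancels
the two weighted by `conj m²` and `m²` and leaves `(1 - r²) (conj A ∧ S' - A ∧ conj S')`.
The factor `1 - r²` absorbs the denominator `1 + r`, and the cross terms between `P₊` and `P₋`
cancel in the remaining wedge, which is `-2 (P₊ ∧ Q'₊ - P₋ ∧ Q'₋)`.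
-/

section Wedge

variable {R : Type*} [CommRing R] [StarRing R]

def wedge (x y x' y' : R) : R := x * y' - x' * y

def hopfVariation (a m A : R) : R := a * (A * star m ^ 2 + star A)

def beltramiVariation (b m S : R) : R := b * (S + star S * m ^ 2)

theorem wedge_variation_sub_star (a b m A A' S S' : R) (ha : star a = a) (hb : star b = b) :
    wedge (hopfVariation a m A) (beltramiVariation b m S)
        (hopfVariation a m A') (beltramiVariation b m S')
      - wedge (star (hopfVariation a m A)) (star (beltramiVariation b m S))
        (star (hopfVariation a m A')) (star (beltramiVariation b m S'))
      = a * b * (1 - (m * star m) ^ 2)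
        * (wedge (star A) S (star A') S' - wedge A (star S) A' (star S')) := by
  simp only [wedge, hopfVariation, beltramiVariation, star_mul', star_add, star_pow,
    star_star, ha, hb]
  ring

theorem wedge_star_sub_add (P M P' M' : R) :
    wedge (star (P - M)) (P + M) (star (P' - M')) (P' + M')
      - wedge (P - M) (star (P + M)) (P' - M') (star (P' + M'))
      = -2 * (wedge P (star P) P' (star P') - wedge M (star M) M' (star M')) := by
  simp only [wedge, star_sub, star_add]
  ring

end Wedge

theorem canonical_symplectic_pairing_general
    (m : ℂ) (eφ : ℝ)
    (Pp Pm Pp' Pm' : ℂ)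
    (Qp Qm Qp' Qm' : ℂ)
    (hQp : Qp = (starRingEnd ℂ) Pp) (hQm : Qm = (starRingEnd ℂ) Pm)
    (hQp' : Qp' = (starRingEnd ℂ) Pp') (hQm' : Qm' = (starRingEnd ℂ) Pm')
    (δΦ δμ δΦ' δμ' : ℂ)
    (hδΦ : δΦ = (1 / 2) * (eφ : ℂ)
        * ((Pp - Pm) * ((starRingEnd ℂ) m) ^ 2 + (Qp - Qm)))
    (hδμ : δμ = (1 / 2) * (1 + (‖m‖ : ℂ) ^ 2)⁻¹
        * ((Pp + Pm) + (Qp + Qm) * m ^ 2))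
    (hδΦ' : δΦ' = (1 / 2) * (eφ : ℂ)
        * ((Pp' - Pm') * ((starRingEnd ℂ) m) ^ 2 + (Qp' - Qm')))
    (hδμ' : δμ' = (1 / 2) * (1 + (‖m‖ : ℂ) ^ 2)⁻¹
        * ((Pp' + Pm') + (Qp' + Qm') * m ^ 2)) :
    Complex.I * ((δΦ * δμ' - δΦ' * δμ)
        - ((starRingEnd ℂ) δΦ * (starRingEnd ℂ) δμ'
          - (starRingEnd ℂ) δΦ' * (starRingEnd ℂ) δμ))
    = -(Complex.I / 2) * (1 - (‖m‖ : ℂ) ^ 2) * (eφ : ℂ)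
        * ((Pp * Qp' - Pp' * Qp) - (Pm * Qm' - Pm' * Qm)) := by
  set a : ℂ := (1 / 2) * (eφ : ℂ)
  set b : ℂ := (1 / 2) * (1 + (‖m‖ : ℂ) ^ 2)⁻¹
  have ha : star a = a := by simp [a]
  have hb : star b = b := by simp [b]
  subst hQp hQm hQp' hQm'
  simp only [starRingEnd_apply, ← star_sub, ← star_add] at *
  have key := wedge_variation_sub_star a b m (Pp - Pm) (Pp' - Pm') (Pp + Pm) (Pp' + Pm') ha hb
  rw [wedge_star_sub_add] at key
  simp only [wedge, hopfVariation, beltramiVariation, ← hδΦ, ← hδμ, ← hδΦ', ← hδμ'] at key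
  rw [key, ← starRingEnd_apply, Complex.mul_conj']
  have hpos : (1 : ℂ) + (‖m‖ : ℂ) ^ 2 ≠ 0 := by norm_cast; positivity
  simp only [a, b]
  field_simp
  ring

/-- Pointwise identity underlying Proposition 4.7: the canonical symplectic
pairing expressed via δΦ and δμ reduces to the difference of the
Weil–Petersson pairings. Here Q_± = conj(P_±), Q'_± = conj(P'_±), and
X ∧ Y' denotes the antisymmetrization X·Y' - X'·Y. -/
theorem canonical_symplectic_pairing
    (m : ℂ) (hm : ‖m‖ < 1) (eφ : ℝ) (heφ : 0 < eφ)
    (Pp Pm Pp' Pm' : ℂ)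
    (Qp Qm Qp' Qm' : ℂ)
    (hQp : Qp = (starRingEnd ℂ) Pp) (hQm : Qm = (starRingEnd ℂ) Pm)
    (hQp' : Qp' = (starRingEnd ℂ) Pp') (hQm' : Qm' = (starRingEnd ℂ) Pm')
    (δΦ δμ δΦ' δμ' : ℂ)
    (hδΦ : δΦ = (1 / 2) * (eφ : ℂ)
        * ((Pp - Pm) * ((starRingEnd ℂ) m) ^ 2 + (Qp - Qm)))
    (hδμ : δμ = (1 / 2) * (1 + (‖m‖ : ℂ) ^ 2)⁻¹
        * ((Pp + Pm) + (Qp + Qm) * m ^ 2))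
    (hδΦ' : δΦ' = (1 / 2) * (eφ : ℂ)
        * ((Pp' - Pm') * ((starRingEnd ℂ) m) ^ 2 + (Qp' - Qm')))
    (hδμ' : δμ' = (1 / 2) * (1 + (‖m‖ : ℂ) ^ 2)⁻¹
        * ((Pp' + Pm') + (Qp' + Qm') * m ^ 2)) :
    Complex.I * ((δΦ * δμ' - δΦ' * δμ)
        - ((starRingEnd ℂ) δΦ * (starRingEnd ℂ) δμ'
          - (starRingEnd ℂ) δΦ' * (starRingEnd ℂ) δμ))
    = -(Complex.I / 2) * (1 - (‖m‖ : ℂ) ^ 2) * (eφ : ℂ)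
        * ((Pp * Qp' - Pp' * Qp) - (Pm * Qm' - Pm' * Qm)) :=
  canonical_symplectic_pairing_general m eφ Pp Pm Pp' Pm' Qp Qm Qp' Qm' hQp hQm hQp' hQm' δΦ δμ δΦ'
    δμ' hδΦ hδμ hδΦ' hδμ'
end
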